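/- Let L be a finite-dimensional Lie algebra over any field F. Then every maximal subalgebra of L is a c-ideal of L if and only if L is solvable. -/

import Mathlib

/-! Common definitions: c-ideals and related notions for Lie algebras
(following D. Towers, "C-ideals of Lie algebras"). -/

section Defs

variable (F : Type*) {L : Type*} [Field F] [LieRing L] [LieAlgebra F L]

/-- `B` is a *c-ideal* of `L`: there is an ideal `C` of `L` with `L = B + C` and
`B ∩ C ≤ B_L`, where `B_L` is the largest ideal of `L` contained in `B`; equivalently,
`B ∩ C` is contained in some ideal `D` of `L` with `D ≤ B`. -/
def IsCIdeal (B : LieSubalgebra F L) : Prop :=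
  ∃ C : LieIdeal F L,
    B.toSubmodule ⊔ (C : Submodule F L) = ⊤ ∧
    ∃ D : LieIdeal F L, (∀ x ∈ D, x ∈ B) ∧ ∀ x ∈ B, x ∈ C → x ∈ D

/-- A maximal subalgebra of `L`: proper, and maximal among proper subalgebras. -/
def IsMaximalSubalgebra (M : LieSubalgebra F L) : Prop :=
  M ≠ ⊤ ∧ ∀ K : LieSubalgebra F L, M < K → K = ⊤

/-- `B` is a maximal subalgebra of the subalgebra `C`:
`B` is a proper subalgebra of `C`, maximal among proper subalgebras contained in `C`. -/
def IsMaximalSubalgebraOf (B C : LieSubalgebra F L) : Prop :=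
  B < C ∧ ∀ K : LieSubalgebra F L, B < K → K ≤ C → K = C

/-- A maximal nilpotent subalgebra of `L`:
nilpotent and maximal among nilpotent subalgebras. -/
def IsMaximalNilpotentSubalgebra (C : LieSubalgebra F L) : Prop :=
  LieRing.IsNilpotent C ∧
    ∀ D : LieSubalgebra F L, LieRing.IsNilpotent D → C ≤ D → C = D

/-- The natural quotient map `L → L ⧸ I` as a morphism of Lie algebras. -/
def quotMk (I : LieIdeal F L) : L →ₗ⁅F⁆ L ⧸ I :=
  { (LieSubmodule.Quotient.mk' I).toLinearMap with
    map_lie' := fun {_ _} => rfl }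

/-- A supersolvable Lie algebra: there is a chain of ideals `0 = L_0 ⊆ ⋯ ⊆ L_n = L`
with `dim L_i = i` for each `0 ≤ i ≤ n`. -/
def IsSupersolvable (L : Type*) [LieRing L] [LieAlgebra F L] : Prop :=
  ∃ (n : ℕ) (c : ℕ → LieIdeal F L), Monotone c ∧ c 0 = ⊥ ∧ c n = ⊤ ∧
    ∀ i ≤ n, Module.finrank F (c i) = i

/-- A minimal abelian ideal of `L`: a nonzero abelian ideal `A` such that the only
ideals of `L` contained in `A` are `0` and `A`. -/
def IsMinimalAbelianIdeal (A : LieIdeal F L) : Prop :=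
  A ≠ ⊥ ∧ IsLieAbelian A ∧ ∀ I : LieIdeal F L, I ≤ A → I = ⊥ ∨ I = A

/-- The one-dimensional subspace spanned by `x`, as a Lie subalgebra
(it is closed under the bracket since `⁅x,x⁆ = 0`). -/
def lineSpan (x : L) : LieSubalgebra F L :=
  { Submodule.span F {x} with
    lie_mem' := by
      intro a b ha hb
      replace ha : a ∈ Submodule.span F {x} := ha
      replace hb : b ∈ Submodule.span F {x} := hb
      rw [Submodule.mem_span_singleton] at ha hb
      obtain ⟨c, rfl⟩ := ha
      obtain ⟨d, rfl⟩ := hb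
      show ⁅c • x, d • x⁆ ∈ Submodule.span F {x}
      simp }

/-- The Frattini subalgebra of a Lie algebra: the intersection of all maximal subalgebras. -/
def frattiniSubalgebra (L : Type*) [LieRing L] [LieAlgebra F L] : LieSubalgebra F L :=
  sInf {M : LieSubalgebra F L | IsMaximalSubalgebra F M}

/-- An almost abelian Lie algebra `K`: `K = K² ⊕ Fx` for some `x ∈ K`, where the derived
subalgebra `K²` is abelian and `⁅x, y⁆ = y` for all `y ∈ K²`. -/
def IsAlmostAbelian (K : Type*) [LieRing K] [LieAlgebra F K] : Prop :=
  ∃ x : K, IsLieAbelian (LieAlgebra.derivedSeries F K 1) ∧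
    (∀ y ∈ LieAlgebra.derivedSeries F K 1, ⁅x, y⁆ = y) ∧
    (LieAlgebra.derivedSeries F K 1 : Submodule F K) ⊔ Submodule.span F {x} = ⊤ ∧
    (LieAlgebra.derivedSeries F K 1 : Submodule F K) ⊓ Submodule.span F {x} = ⊥

end Defs

/-! If `L` is solvable and `M` is a maximal subalgebra, let `C = L⁽ᵏ⁾` be the last term of the
derived series not contained in `M`. Then `M + C = L` by maximality, and `M ∩ C` is an ideal
because `⁅C, C⁆ = L⁽ᵏ⁺¹⁾ ⊆ M`.

Conversely, the property passes to quotients, so in a minimal non-solvable counterexample every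
proper quotient is solvable and the stable term `N` of the derived series lies in every nonzero
ideal. Given `a ∈ N`, a maximal subalgebra `U` containing the Engel subalgebra of `a` would be a
c-ideal for some ideal `C ≠ 0`, so `a ∈ U ∩ C ⊆ D ⊆ U` for an ideal `D`; the Fitting decomposition
`L = ker (ad a)ⁿ ⊕ im (ad a)ⁿ` then puts all of `L` into `U`. Hence `ad a` is nilpotent for every
`a ∈ N`, so `N` is nilpotent by Engel's theorem, contradicting `N = ⁅N, N⁆ ≠ 0`. -/

open LieAlgebra LieSubalgebra

section
variable {R L : Type*} [CommRing R] [LieRing L] [LieAlgebra R L]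

namespace LieSubalgebra

def supLieIdeal (K : LieSubalgebra R L) (I : LieIdeal R L) : LieSubalgebra R L :=
  { K.toSubmodule ⊔ (I : Submodule R L) with
    lie_mem' := by
      intro x y hx hy
      obtain ⟨k, hk, i, hi, rfl⟩ := Submodule.mem_sup.mp hx
      obtain ⟨k', hk', i', hi', rfl⟩ := Submodule.mem_sup.mp hy
      rw [lie_add, add_lie, add_lie, add_assoc]
      exact Submodule.add_mem_sup (K.lie_mem hk hk') <| I.add_mem (lie_mem_left R L I _ _ hi) <|
        I.add_mem (lie_mem_right R L I _ _ hi') (lie_mem_left R L I _ _ hi) }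

@[simp]
lemma toSubmodule_supLieIdeal (K : LieSubalgebra R L) (I : LieIdeal R L) :
    (K.supLieIdeal I).toSubmodule = K.toSubmodule ⊔ I :=
  rfl

lemma eq_top_of_engel_le_of_mem_lieIdeal [IsArtinian R L] {U : LieSubalgebra R L} {a : L}
    {D : LieIdeal R L} (hE : engel R a ≤ U) (hD : (D : LieSubalgebra R L) ≤ U) (ha : a ∈ D) :
    U = ⊤ := by
  obtain ⟨n, hn⟩ := Filter.eventually_atTop.mp (ad R L a).eventually_codisjoint_ker_pow_range_pow
  have hker : LinearMap.ker (ad R L a ^ (n + 1)) ≤ U.toSubmodule :=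
    fun x hx ↦ hE ((mem_engel_iff R a x).mpr ⟨_, hx⟩)
  have hrange : LinearMap.range (ad R L a ^ (n + 1)) ≤ U.toSubmodule := by
    rintro - ⟨y, rfl⟩
    rw [pow_succ', Module.End.mul_apply, ad_apply]
    exact hD (lie_mem_left R L D _ _ ha)
  rw [← toSubmodule_eq_top, eq_top_iff, ← (hn (n + 1) n.le_succ).eq_top]
  exact sup_le hker hrange

end LieSubalgebra

lemma exists_derivedSeries_stable [IsArtinian R L] :
    ∃ n, ∀ m, n ≤ m → derivedSeries R L m = derivedSeries R L n := by
  have : WellFoundedGT (LieIdeal R L)ᵒᵈ := LieSubmodule.wellFoundedLT_of_isArtinian R L L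
  obtain ⟨n, hn⟩ := WellFoundedGT.monotone_chain_condition (α := (LieIdeal R L)ᵒᵈ)
    ⟨fun k ↦ OrderDual.toDual (derivedSeries R L k), fun _ _ h ↦ derivedSeriesOfIdeal_antitone ⊤ h⟩
  exact ⟨n, fun m hm ↦ (hn m hm).symm⟩

end

section
variable {F L : Type*} [Field F] [LieRing L] [LieAlgebra F L]

lemma isMaximalSubalgebra_iff_isCoatom {M : LieSubalgebra F L} :
    IsMaximalSubalgebra F M ↔ IsCoatom M :=
  Iff.rfl

lemma IsMaximalSubalgebra.toSubmodule_sup_eq_top {M : LieSubalgebra F L}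
    (hM : IsMaximalSubalgebra F M) {I : LieIdeal F L} (hI : ¬ (I : LieSubalgebra F L) ≤ M) :
    M.toSubmodule ⊔ (I : Submodule F L) = ⊤ := by
  rw [← toSubmodule_supLieIdeal, toSubmodule_eq_top]
  refine hM.2 _ (lt_of_le_of_ne (fun x hx ↦ Submodule.mem_sup_left hx) fun h ↦ hI ?_)
  rw [h]
  exact fun x hx ↦ Submodule.mem_sup_right hx

lemma IsMaximalSubalgebra.isCIdeal_of_lie_le {M : LieSubalgebra F L}
    (hM : IsMaximalSubalgebra F M) {C : LieIdeal F L} (hCM : ¬ (C : LieSubalgebra F L) ≤ M)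
    (hCC : ((⁅C, C⁆ : LieIdeal F L) : LieSubalgebra F L) ≤ M) : IsCIdeal F M := by
  have hsup := hM.toSubmodule_sup_eq_top hCM
  refine ⟨C, hsup, { toSubmodule := M.toSubmodule ⊓ C, lie_mem := ?_ },
    fun x hx ↦ hx.1, fun x hxM hxC ↦ ⟨hxM, hxC⟩⟩
  rintro x y ⟨hyM, hyC⟩
  refine ⟨?_, C.lie_mem hyC⟩
  obtain ⟨m, hm, c, hc, rfl⟩ :=
    Submodule.mem_sup.mp (hsup ▸ Submodule.mem_top : x ∈ M.toSubmodule ⊔ C)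
  rw [add_lie]
  exact M.add_mem (M.lie_mem hm hyM) (hCC (LieSubmodule.lie_mem_lie hc hyC))

theorem isCIdeal_of_isSolvable [IsSolvable L] {M : LieSubalgebra F L}
    (hM : IsMaximalSubalgebra F M) : IsCIdeal F M := by
  obtain ⟨k, hk, hk'⟩ := Nat.exists_not_and_succ_of_not_zero_of_exists
    (p := fun k ↦ (derivedSeries F L k : LieSubalgebra F L) ≤ M)
    (by simpa using hM.1)
    (by obtain ⟨k, hk⟩ := IsSolvable.solvable (R := F) (L := L); exact ⟨k, fun x hx ↦ by simp_all⟩)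
  rw [derivedSeries_def, derivedSeriesOfIdeal_succ] at hk'
  exact hM.isCIdeal_of_lie_le hk hk'

end

section
variable {F L L' : Type*} [Field F] [LieRing L] [LieAlgebra F L] [LieRing L'] [LieAlgebra F L']
  {f : L →ₗ⁅F⁆ L'}

lemma IsMaximalSubalgebra.comap (hf : Function.Surjective f) {M : LieSubalgebra F L'}
    (hM : IsMaximalSubalgebra F M) : IsMaximalSubalgebra F (M.comap f) := by
  refine ⟨fun h ↦ hM.1 (eq_top_iff.mpr fun y _ ↦ ?_), fun K hK ↦ eq_top_iff.mpr fun x _ ↦ ?_⟩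
  · obtain ⟨x, rfl⟩ := hf y
    exact (h ▸ mem_top x : x ∈ M.comap f)
  have hMK : M ≤ K.map f := fun y hy ↦ by
    obtain ⟨x, rfl⟩ := hf y
    exact (mem_map _ _ _).mpr ⟨x, hK.le hy, rfl⟩
  have hMK' : M ≠ K.map f := fun h ↦ hK.not_ge (h ▸ map_le_iff_le_comap.mp le_rfl)
  obtain ⟨w, hw, hwx⟩ := (mem_map _ _ _).mp (hM.2 _ (hMK.lt_of_ne hMK') ▸ mem_top (f x))
  have hxw : x - w ∈ M.comap f := by simp [hwx, M.zero_mem]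
  simpa using K.add_mem hw (hK.le hxw)

lemma IsCIdeal.of_comap (hf : Function.Surjective f) {M : LieSubalgebra F L'}
    (h : IsCIdeal F (M.comap f)) : IsCIdeal F M := by
  obtain ⟨C, hsup, D, hDM, hCD⟩ := h
  refine ⟨C.map f, ?_, D.map f, fun y hy ↦ ?_, fun y hyM hyC ↦ ?_⟩
  · refine eq_top_iff.mpr fun y _ ↦ ?_
    obtain ⟨x, rfl⟩ := hf y
    obtain ⟨m, hm, c, hc, rfl⟩ :=
      Submodule.mem_sup.mp (hsup ▸ Submodule.mem_top : x ∈ (M.comap f).toSubmodule ⊔ _)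
    rw [map_add]
    exact Submodule.add_mem_sup hm (LieIdeal.mem_map hc)
  · obtain ⟨⟨x, hx⟩, rfl⟩ := LieIdeal.mem_map_of_surjective hf hy
    exact hDM x hx
  · obtain ⟨⟨x, hx⟩, rfl⟩ := LieIdeal.mem_map_of_surjective hf hyC
    exact LieIdeal.mem_map (hCD x hyM hx)

lemma forall_isCIdeal_of_surjective (hf : Function.Surjective f)
    (h : ∀ M : LieSubalgebra F L, IsMaximalSubalgebra F M → IsCIdeal F M)
    (M : LieSubalgebra F L') (hM : IsMaximalSubalgebra F M) : IsCIdeal F M :=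
  (h _ (hM.comap hf)).of_comap hf

end

section
variable {F L : Type*} [Field F] [LieRing L] [LieAlgebra F L]

lemma surjective_quotMk (I : LieIdeal F L) : Function.Surjective (quotMk F I) :=
  Quot.mk_surjective

lemma ker_quotMk (I : LieIdeal F L) : (quotMk F I).ker = I := by
  ext x
  exact LieSubmodule.Quotient.mk_eq_zero I

lemma exists_derivedSeries_le_of_isSolvable_quotient (I : LieIdeal F L) [IsSolvable (L ⧸ I)] :
    ∃ k, derivedSeries F L k ≤ I := by
  obtain ⟨k, hk⟩ := IsSolvable.solvable (R := F) (L := L ⧸ I)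
  refine ⟨k, ?_⟩
  rw [← ker_quotMk I, ← LieIdeal.map_eq_bot_iff,
    LieIdeal.derivedSeries_map_eq k (surjective_quotMk I), hk]

lemma engel_eq_top_of_forall_isCIdeal [FiniteDimensional F L]
    (h : ∀ M : LieSubalgebra F L, IsMaximalSubalgebra F M → IsCIdeal F M) {a : L}
    (ha : ∀ I : LieIdeal F L, I ≠ ⊥ → a ∈ I) : engel F a = ⊤ := by
  obtain hE | ⟨U, hU, hEU⟩ := eq_top_or_exists_le_coatom (engel F a)
  · exact hE
  rw [← isMaximalSubalgebra_iff_isCoatom] at hU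
  obtain ⟨C, hsup, D, hDU, hCD⟩ := h U hU
  have hC : C ≠ ⊥ := by
    rintro rfl
    exact hU.1 (by simpa using hsup)
  exact (hU.1 (eq_top_of_engel_le_of_mem_lieIdeal hEU hDU
    (hCD a (hEU (self_mem_engel F a)) (ha C hC)))).elim

theorem isSolvable_of_forall_isCIdeal_of_forall_isSolvable_quotient [FiniteDimensional F L]
    (h : ∀ M : LieSubalgebra F L, IsMaximalSubalgebra F M → IsCIdeal F M)
    (hquot : ∀ I : LieIdeal F L, I ≠ ⊥ → IsSolvable (L ⧸ I)) : IsSolvable L := by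
  obtain ⟨n, hn⟩ := exists_derivedSeries_stable (R := F) (L := L)
  set N := derivedSeries F L n
  have hN : ∀ I : LieIdeal F L, I ≠ ⊥ → N ≤ I := fun I hI ↦ by
    have := hquot I hI
    obtain ⟨k, hk⟩ := exists_derivedSeries_le_of_isSolvable_quotient I
    calc N = derivedSeries F L (max n k) := (hn _ (le_max_left n k)).symm
      _ ≤ derivedSeries F L k := derivedSeriesOfIdeal_antitone ⊤ (le_max_right n k)
      _ ≤ I := hk
  have : LieRing.IsNilpotent N := isNilpotent_of_forall_le_engel (N : LieSubalgebra F L)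
    fun x hx ↦ (engel_eq_top_of_forall_isCIdeal h fun I hI ↦ hN I hI hx).symm ▸ le_top
  -- the derived series of `N` is the tail of that of `L`, which is constant
  obtain ⟨k, hk⟩ := IsSolvable.solvable (R := F) (L := N)
  rw [LieIdeal.derivedSeries_eq_bot_iff, ← derivedSeriesOfIdeal_add, ← derivedSeries_def,
    hn _ (Nat.le_add_left n k)] at hk
  exact IsSolvable.mk hk

theorem isSolvable_of_forall_isCIdeal [FiniteDimensional F L]
    (h : ∀ M : LieSubalgebra F L, IsMaximalSubalgebra F M → IsCIdeal F M) : IsSolvable L := by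
  induction hn : Module.finrank F L using Nat.strong_induction_on generalizing L with
  | _ n ih =>
  refine isSolvable_of_forall_isCIdeal_of_forall_isSolvable_quotient h fun I hI ↦ ?_
  have hdimI : Module.finrank F I ≠ 0 :=
    fun h0 ↦ hI ((LieSubmodule.toSubmodule_eq_bot I).mp (Submodule.finrank_eq_zero.mp h0))
  have : Module.finrank F (L ⧸ I) + Module.finrank F I = n :=
    hn ▸ Submodule.finrank_quotient_add_finrank I.toSubmodule
  exact ih _ (by omega) (forall_isCIdeal_of_surjective (surjective_quotMk I) h) rfl

end

/-- All maximal subalgebras of `L` are c-ideals of `L` if and only if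
`L` is solvable. -/
theorem forall_maximal_isCIdeal_iff_isSolvable {F L : Type*} [Field F] [LieRing L]
    [LieAlgebra F L] [FiniteDimensional F L] :
    (∀ M : LieSubalgebra F L, IsMaximalSubalgebra F M → IsCIdeal F M) ↔
      LieAlgebra.IsSolvable L :=
  ⟨isSolvable_of_forall_isCIdeal, fun _ _ ↦ isCIdeal_of_isSolvable⟩
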